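/- arXiv:2205.11793 — 2 statements merged into one kernel-verified Lean document; each statement's English description precedes it below -/
import Mathlib

section
/- Let U ⊆ ℝⁿ be a convex set and f: U → I(ℝ) a convex interval valued function that is gH-directionally differentiable on U. Then f'(x, y − x) ⪯ f(y) −_gH f(x) for all x, y ∈ U, where f'(x, v) = lim_{t→0⁺} (1/t)(f(x + tv) −_gH f(x)) is the gH-directional derivative. -/
/-- A closed bounded interval `[lo, hi]` in `ℝ`. -/
structure IntervalR where
  lo : ℝ
  hi : ℝ
  lo_le_hi : lo ≤ hi

namespace IntervalR

/-- Minkowski sum of intervals. -/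
def add (A B : IntervalR) : IntervalR :=
  ⟨A.lo + B.lo, A.hi + B.hi, add_le_add A.lo_le_hi B.lo_le_hi⟩

/-- Scalar multiple of an interval. -/
noncomputable def smul (l : ℝ) (A : IntervalR) : IntervalR :=
  if h : 0 ≤ l then ⟨l * A.lo, l * A.hi, mul_le_mul_of_nonneg_left A.lo_le_hi h⟩
  else ⟨l * A.hi, l * A.lo, by nlinarith [A.lo_le_hi, lt_of_not_ge h]⟩

/-- Generalized Hukuhara difference. -/
def gH (A B : IntervalR) : IntervalR :=
  ⟨min (A.lo - B.lo) (A.hi - B.hi), max (A.lo - B.lo) (A.hi - B.hi), min_le_max⟩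

/-- Hausdorff metric on intervals. -/
def dH (A B : IntervalR) : ℝ := max |A.lo - B.lo| |A.hi - B.hi|

/-- The partial order `A ⪯ B`. -/
def le (A B : IntervalR) : Prop := A.lo ≤ B.lo ∧ A.hi ≤ B.hi

/-- The strict order `A ≺ B`. -/
def lt (A B : IntervalR) : Prop := le A B ∧ A ≠ B

/-- The degenerate interval `[0,0]`. -/
def zero : IntervalR := ⟨0, 0, le_refl 0⟩

end IntervalR

/-- `f` is a convex interval valued function on the convex set `U`. -/
def ConvexIVF {n : ℕ} (U : Set (EuclideanSpace ℝ (Fin n)))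
    (f : EuclideanSpace ℝ (Fin n) → IntervalR) : Prop :=
  ∀ x ∈ U, ∀ y ∈ U, ∀ t : ℝ, t ∈ Set.Icc (0 : ℝ) 1 →
    IntervalR.le (f (t • x + (1 - t) • y))
      (IntervalR.add (IntervalR.smul t (f x)) (IntervalR.smul (1 - t) (f y)))

/-- `f` has gH-directional derivative `L` at `x` in the direction `v`, i.e.
`(1/t) * (f(x + t v) −_gH f(x)) → L` in the Hausdorff metric as `t → 0⁺`. -/
def HasGHDirDeriv {n : ℕ} (f : EuclideanSpace ℝ (Fin n) → IntervalR)
    (x v : EuclideanSpace ℝ (Fin n)) (L : IntervalR) : Prop :=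
  Filter.Tendsto
    (fun t : ℝ => IntervalR.dH (IntervalR.smul (1 / t) (IntervalR.gH (f (x + t • v)) (f x))) L)
    (nhdsWithin 0 (Set.Ioi 0)) (nhds 0)

/-- A real function `g` has directional derivative `d` at `x` in the direction `v`. -/
def HasDirDeriv {n : ℕ} (g : EuclideanSpace ℝ (Fin n) → ℝ)
    (x v : EuclideanSpace ℝ (Fin n)) (d : ℝ) : Prop :=
  Filter.Tendsto (fun t : ℝ => (g (x + t • v) - g x) / t) (nhdsWithin 0 (Set.Ioi 0)) (nhds d)

/-! The difference quotients `(1/t)(f(x + t(y - x)) ⊖ f(x))` are bounded by the chord `f(y) ⊖ f(x)`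
for every `t ∈ (0, 1]`: convexity bounds `f(x + t(y - x))` by `(1 - t) f(x) + t f(y)`, the gH-difference
with `f(x)` is monotone, and it turns that combination into `t (f(y) ⊖ f(x))`. Both endpoints of the
difference quotient converge to those of `f'(x, y - x)`, so the bound passes to the limit. -/

open Filter Topology

namespace IntervalR

@[ext]
theorem ext {A B : IntervalR} (hlo : A.lo = B.lo) (hhi : A.hi = B.hi) : A = B := by
  cases A; cases B; simp_all

theorem smul_of_nonneg {l : ℝ} (hl : 0 ≤ l) (A : IntervalR) :
    smul l A = ⟨l * A.lo, l * A.hi, mul_le_mul_of_nonneg_left A.lo_le_hi hl⟩ :=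
  dif_pos hl

theorem smul_mono {l : ℝ} (hl : 0 ≤ l) {A B : IntervalR} (hAB : le A B) :
    le (smul l A) (smul l B) := by
  rw [smul_of_nonneg hl, smul_of_nonneg hl]
  exact ⟨mul_le_mul_of_nonneg_left hAB.1 hl, mul_le_mul_of_nonneg_left hAB.2 hl⟩

theorem one_div_smul_smul {t : ℝ} (ht : 0 < t) (A : IntervalR) : smul (1 / t) (smul t A) = A := by
  rw [smul_of_nonneg ht.le, smul_of_nonneg (by positivity)]
  ext <;> field_simp

theorem gH_mono_left {A B : IntervalR} (hAB : le A B) (C : IntervalR) : le (gH A C) (gH B C) :=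
  ⟨min_le_min (by linarith [hAB.1]) (by linarith [hAB.2]),
    max_le_max (by linarith [hAB.1]) (by linarith [hAB.2])⟩

theorem gH_add_smul_self {t : ℝ} (ht₀ : 0 ≤ t) (ht₁ : t ≤ 1) (A B : IntervalR) :
    gH (add (smul (1 - t) A) (smul t B)) A = smul t (gH B A) := by
  have h₁ := smul_of_nonneg (sub_nonneg.2 ht₁) A
  have h₂ := smul_of_nonneg ht₀ B
  ext
  · simp only [gH, add, h₁, h₂, smul_of_nonneg ht₀]
    rw [mul_min_of_nonneg _ _ ht₀]
    congr 1 <;> ring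
  · simp only [gH, add, h₁, h₂, smul_of_nonneg ht₀]
    rw [mul_max_of_nonneg _ _ ht₀]
    congr 1 <;> ring

theorem smul_gH_le_gH_of_le_add_smul {t : ℝ} (ht₀ : 0 < t) (ht₁ : t ≤ 1) {A B C : IntervalR}
    (hC : le C (add (smul (1 - t) A) (smul t B))) : le (smul (1 / t) (gH C A)) (gH B A) := by
  have h := smul_mono (one_div_nonneg.2 ht₀.le) (gH_mono_left hC A)
  rwa [gH_add_smul_self ht₀.le ht₁, one_div_smul_smul ht₀] at h

theorem tendsto_lo_of_tendsto_dH {α : Type*} {l : Filter α} {Q : α → IntervalR} {L : IntervalR}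
    (hQ : Tendsto (fun a => dH (Q a) L) l (𝓝 0)) : Tendsto (fun a => (Q a).lo) l (𝓝 L.lo) :=
  tendsto_iff_norm_sub_tendsto_zero.2 <|
    squeeze_zero (fun _ => norm_nonneg _) (fun a => le_max_left _ |(Q a).hi - L.hi|) hQ

theorem tendsto_hi_of_tendsto_dH {α : Type*} {l : Filter α} {Q : α → IntervalR} {L : IntervalR}
    (hQ : Tendsto (fun a => dH (Q a) L) l (𝓝 0)) : Tendsto (fun a => (Q a).hi) l (𝓝 L.hi) :=
  tendsto_iff_norm_sub_tendsto_zero.2 <|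
    squeeze_zero (fun _ => norm_nonneg _) (fun a => le_max_right |(Q a).lo - L.lo| _) hQ

theorem le_of_tendsto_dH {α : Type*} {l : Filter α} [l.NeBot] {Q : α → IntervalR}
    {L G : IntervalR} (hQ : Tendsto (fun a => dH (Q a) L) l (𝓝 0)) (hle : ∀ᶠ a in l, le (Q a) G) :
    le L G :=
  ⟨le_of_tendsto (tendsto_lo_of_tendsto_dH hQ) (hle.mono fun _ h => h.1),
    le_of_tendsto (tendsto_hi_of_tendsto_dH hQ) (hle.mono fun _ h => h.2)⟩

end IntervalR

namespace ConvexIVF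

variable {n : ℕ} {U : Set (EuclideanSpace ℝ (Fin n))} {f : EuclideanSpace ℝ (Fin n) → IntervalR}
  {x y : EuclideanSpace ℝ (Fin n)}

theorem le_add_smul (hf : ConvexIVF U f) (hx : x ∈ U) (hy : y ∈ U) {t : ℝ}
    (ht : t ∈ Set.Icc (0 : ℝ) 1) :
    IntervalR.le (f (x + t • (y - x)))
      (IntervalR.add (IntervalR.smul (1 - t) (f x)) (IntervalR.smul t (f y))) := by
  have h := hf x hx y hy (1 - t) ⟨sub_nonneg.2 ht.2, sub_le_self _ ht.1⟩
  rwa [sub_sub_cancel, show (1 - t) • x + t • y = x + t • (y - x) by module] at h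

theorem smul_gH_le_gH (hf : ConvexIVF U f) (hx : x ∈ U) (hy : y ∈ U) {t : ℝ}
    (ht : t ∈ Set.Ioc (0 : ℝ) 1) :
    IntervalR.le (IntervalR.smul (1 / t) (IntervalR.gH (f (x + t • (y - x))) (f x)))
      (IntervalR.gH (f y) (f x)) :=
  IntervalR.smul_gH_le_gH_of_le_add_smul ht.1 ht.2
    (hf.le_add_smul hx hy (Set.Ioc_subset_Icc_self ht))

end ConvexIVF

theorem convexIVF_dirDeriv_le_gH_diff_general {n : ℕ} (U : Set (EuclideanSpace ℝ (Fin n)))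
    (f : EuclideanSpace ℝ (Fin n) → IntervalR) (hf : ConvexIVF U f)
    (f' : EuclideanSpace ℝ (Fin n) → EuclideanSpace ℝ (Fin n) → IntervalR)
    (hdiff : ∀ x ∈ U, ∀ v : EuclideanSpace ℝ (Fin n), HasGHDirDeriv f x v (f' x v)) :
    ∀ x ∈ U, ∀ y ∈ U,
      IntervalR.le (f' x (y - x)) (IntervalR.gH (f y) (f x)) := by
  intro x hx y hy
  refine IntervalR.le_of_tendsto_dH (hdiff x hx (y - x)) ?_
  filter_upwards [Ioc_mem_nhdsGT one_pos] with t ht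
  exact hf.smul_gH_le_gH hx hy ht

theorem convexIVF_dirDeriv_le_gH_diff {n : ℕ} (U : Set (EuclideanSpace ℝ (Fin n)))
    (hU : Convex ℝ U)
    (f : EuclideanSpace ℝ (Fin n) → IntervalR) (hf : ConvexIVF U f)
    (f' : EuclideanSpace ℝ (Fin n) → EuclideanSpace ℝ (Fin n) → IntervalR)
    (hdiff : ∀ x ∈ U, ∀ v : EuclideanSpace ℝ (Fin n), HasGHDirDeriv f x v (f' x v)) :
    ∀ x ∈ U, ∀ y ∈ U,
      IntervalR.le (f' x (y - x)) (IntervalR.gH (f y) (f x)) :=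
  convexIVF_dirDeriv_le_gH_diff_general U f hf f' hdiff
end

section
/- Let D be a nonempty set, f: D → I(ℝ) an interval valued function with f(x) = [f̲(x), f̄(x)], and λ₁, λ₂ > 0. If x₀ ∈ D is an optimal solution of the scalar problem min_{x∈D} (λ₁ f̲(x) + λ₂ f̄(x)), then x₀ is an efficient point of the interval optimization problem min_{x∈D} f(x), i.e., f(x) ⊀ f(x₀) for all x ∈ D. -/
lemma IntervalR.ext' {A B : IntervalR} (h1 : A.lo = B.lo) (h2 : A.hi = B.hi) : A = B := by
  cases A; cases B; simp_all

theorem efficient_of_weighted_scalarization {α : Type*} (D : Set α) (hne : D.Nonempty)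
    (f : α → IntervalR) (l₁ l₂ : ℝ) (hl₁ : 0 < l₁) (hl₂ : 0 < l₂)
    (x₀ : α) (hx₀ : x₀ ∈ D)
    (hmin : ∀ x ∈ D, l₁ * (f x₀).lo + l₂ * (f x₀).hi ≤ l₁ * (f x).lo + l₂ * (f x).hi) :
    ∀ x ∈ D, ¬ IntervalR.lt (f x) (f x₀) := by
  intro x hx ⟨⟨hlo, hhi⟩, hne'⟩
  have h := hmin x hx
  have hlo' : (f x).lo = (f x₀).lo := by nlinarith
  have hhi' : (f x).hi = (f x₀).hi := by nlinarith
  exact hne' (IntervalR.ext' hlo' hhi')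
end
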